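/- For every integer m ≥ 2, every element (z, f, s, t, u) of Slex(m, 1/6) satisfies z_m = 0 and z_i = 1/2 for every i = 1,…,m−1. -/

import Mathlib

noncomputable section

/-- The tuple type `(z, f, s, t, u)` of five vectors in `ℝ^m`. -/
abbrev Tup (m : ℕ) : Type :=
  (Fin m → ℝ) × (Fin m → ℝ) × (Fin m → ℝ) × (Fin m → ℝ) × (Fin m → ℝ)

def Tz {m : ℕ} (p : Tup m) : Fin m → ℝ := p.1
def Tf {m : ℕ} (p : Tup m) : Fin m → ℝ := p.2.1
def Ts {m : ℕ} (p : Tup m) : Fin m → ℝ := p.2.2.1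
def Tt {m : ℕ} (p : Tup m) : Fin m → ℝ := p.2.2.2.1
def Tu {m : ℕ} (p : Tup m) : Fin m → ℝ := p.2.2.2.2

/-- The feasible set `Flex(m, θ)`. -/
def Flex (m : ℕ) (θ : ℝ) : Set (Tup m) :=
  { p | (∀ i : Fin m, i.val = m - 1 → Tu p i = θ) ∧
        (∀ i : Fin m,
          (3 / 2) * Tu p i - 1 / 2 ≤ Ts p i ∧
          (3 / 2) * Tu p i - 1 ≤ Tt p i ∧
          Tz p i = 2 * (Ts p i - Tt p i) ∧
          -(Tf p i) ≤ Tz p i - 1 / 2 ∧ Tz p i - 1 / 2 ≤ Tf p i ∧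
          0 ≤ Tz p i ∧ Tz p i ≤ 1 ∧ 0 ≤ Tf p i ∧ Tf p i ≤ 1 ∧
          0 ≤ Ts p i ∧ Ts p i ≤ 1 ∧ 0 ≤ Tt p i ∧ Tt p i ≤ 1 ∧
          0 ≤ Tu p i ∧ Tu p i ≤ 1) ∧
        (∀ i : Fin m, 1 ≤ i.val →
          Tu p ⟨i.val - 1, Nat.lt_of_le_of_lt (Nat.sub_le _ _) i.isLt⟩ =
            3 * Tu p i - 2 * Tz p i) }

/-- The set of minimizers of `g` over `S`. -/
def argminOn {α : Type} (g : α → ℝ) (S : Set α) : Set α :=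
  {x ∈ S | ∀ y ∈ S, g x ≤ g y}

/-- The lexicographic optimal set `Slex(m, θ)`: first minimize `s_m + t_m`, then
`s_{m-1} + t_{m-1}`, …, then `s_1 + t_1`, and finally `∑ f_i` over `Flex(m, θ)`. -/
def Slex (m : ℕ) (θ : ℝ) : Set (Tup m) :=
  argminOn (fun p => ∑ i : Fin m, Tf p i)
    ((List.finRange m).reverse.foldl
      (fun S i => argminOn (fun p => Ts p i + Tt p i) S) (Flex m θ))

namespace Stmt7Aux

/-- The forced value of `s_k` (and of `(s+t)_k`). -/
def cc (m k : ℕ) : ℝ := if k = m - 1 then 0 else 1/4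

/-- The forced value of `u_k`. -/
def vv (m k : ℕ) : ℝ := if k = m - 1 then 1/6 else 1/2

/-- The set obtained after the minimizations at indices `m-1, …, K`. -/
def TT (m : ℕ) (K : ℕ) : Set (Tup m) :=
  {p | p ∈ Flex m (1/6) ∧ ∀ i : Fin m, K ≤ i.val → Ts p i = cc m i.val ∧ Tt p i = 0}

/-- The canonical optimal point. -/
def qq (m : ℕ) : Tup m :=
  ⟨fun i => if i.val = m-1 then 0 else 1/2,
   fun i => if i.val = m-1 then 1/2 else 0,
   fun i => if i.val = m-1 then 0 else 1/4,
   fun _ => 0,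
   fun i => if i.val = m-1 then 1/6 else 1/2⟩

lemma qq_mem_Flex (m : ℕ) (hm : 2 ≤ m) : qq m ∈ Flex m (1/6) := by
  refine ⟨?_, ?_, ?_⟩
  · intro i hi; simp [qq, Tu, hi]
  · intro i
    by_cases h : i.val = m - 1 <;>
      simp [qq, Tz, Tf, Ts, Tt, Tu, h] <;> norm_num
  · intro i hi
    have hlt := i.isLt
    have h1 : ¬ (i.val - 1 = m - 1) := by omega
    by_cases h : i.val = m - 1
    · have h2 : ¬ (m - 1 - 1 = m - 1) := by omega
      simp only [qq, Tz, Tu, h, h2, if_true, if_false, if_pos, if_neg, not_false_iff]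
      norm_num [h1]
    · simp only [qq, Tz, Tu]
      rw [if_neg h1, if_neg h, if_neg h]
      norm_num

lemma qq_mem_TT (m : ℕ) (hm : 2 ≤ m) (K : ℕ) : qq m ∈ TT m K := by
  refine ⟨qq_mem_Flex m hm, ?_⟩
  intro i _
  by_cases h : i.val = m - 1 <;> simp [qq, Ts, Tt, cc, h]

lemma u_eq (m : ℕ) (hm : 2 ≤ m) (p : Tup m) (hp : p ∈ Flex m (1/6)) (K : ℕ)
    (hE : ∀ i : Fin m, K ≤ i.val → Ts p i = cc m i.val ∧ Tt p i = 0) :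
    ∀ i : Fin m, K ≤ i.val + 1 → Tu p i = vv m i.val := by
  obtain ⟨hθ, hC, hR⟩ := hp
  suffices H : ∀ d : ℕ, ∀ i : Fin m, m - 1 - i.val = d → K ≤ i.val + 1 →
      Tu p i = vv m i.val by
    intro i hi; exact H _ i rfl hi
  intro d
  induction d with
  | zero =>
      intro i hd hK
      have hi : i.val = m - 1 := by have := i.isLt; omega
      rw [hθ i hi]
      simp [vv, hi]
  | succ d ih =>
      intro i hd hK
      have hlt := i.isLt
      have hi : i.val < m - 1 := by omega
      set i' : Fin m := ⟨i.val + 1, by omega⟩ with hi'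
      have hvi' : i'.val = i.val + 1 := rfl
      have hu' : Tu p i' = vv m i'.val := ih i' (by omega) (by omega)
      have hE' := hE i' (by omega)
      have hz : Tz p i' = 2 * (Ts p i' - Tt p i') := (hC i').2.2.1
      have hr := hR i' (by omega)
      have hidx : (⟨i'.val - 1, Nat.lt_of_le_of_lt (Nat.sub_le _ _) i'.isLt⟩ : Fin m) = i := by
        apply Fin.ext; simp [hvi']
      rw [hidx] at hr
      rw [hr, hu', hz, hE'.1, hE'.2]
      have hne : ¬ (i.val = m - 1) := by omega
      by_cases h : i.val + 1 = m - 1 <;>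
        simp only [vv, cc, hvi', h, hne, if_true, if_false, if_pos, if_neg,
          not_false_iff] <;> norm_num

/-- Lower bounds on `s_k` and `t_k` over `TT m (k+1)`. -/
lemma lb2 (m : ℕ) (hm : 2 ≤ m) (k : ℕ) (hk : k < m) (p : Tup m) (hp : p ∈ TT m (k+1)) :
    cc m k ≤ Ts p ⟨k, hk⟩ ∧ 0 ≤ Tt p ⟨k, hk⟩ := by
  obtain ⟨hF, hE⟩ := hp
  have hu : Tu p ⟨k, hk⟩ = vv m k := u_eq m hm p hF (k+1) hE ⟨k, hk⟩ (le_refl _)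
  obtain ⟨h1, h2, h3, h4, h5, h6, h7, h8, h9, h10, h11, h12, h13, h14, h15⟩ := hF.2.1 ⟨k, hk⟩
  refine ⟨?_, h12⟩
  by_cases h : k = m - 1
  · simpa [cc, h] using h10
  · rw [hu] at h1
    rw [vv, if_neg h] at h1
    rw [cc, if_neg h]
    linarith

lemma qq_val (m : ℕ) (k : ℕ) (hk : k < m) :
    Ts (qq m) ⟨k, hk⟩ + Tt (qq m) ⟨k, hk⟩ = cc m k := by
  by_cases h : k = m - 1 <;> simp [qq, Ts, Tt, cc, h]

lemma step (m : ℕ) (hm : 2 ≤ m) (k : ℕ) (hk : k < m) :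
    argminOn (fun p => Ts p ⟨k, hk⟩ + Tt p ⟨k, hk⟩) (TT m (k+1)) = TT m k := by
  ext p
  constructor
  · rintro ⟨hpT, hmin⟩
    have hq : Ts p ⟨k, hk⟩ + Tt p ⟨k, hk⟩ ≤ cc m k := by
      simpa only [qq_val m k hk] using hmin (qq m) (qq_mem_TT m hm (k+1))
    obtain ⟨hs_lb, ht_lb⟩ := lb2 m hm k hk p hpT
    have hs : Ts p ⟨k, hk⟩ = cc m k := by linarith
    have ht : Tt p ⟨k, hk⟩ = 0 := by linarith
    refine ⟨hpT.1, ?_⟩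
    intro i hi
    rcases eq_or_lt_of_le hi with heq | hlt
    · have hieq : i = ⟨k, hk⟩ := Fin.ext heq.symm
      rw [hieq]
      exact ⟨hs, ht⟩
    · exact hpT.2 i hlt
  · intro hpT
    have hpT' : p ∈ TT m (k+1) :=
      ⟨hpT.1, fun i hi => hpT.2 i (Nat.le_of_succ_le hi)⟩
    refine ⟨hpT', ?_⟩
    intro y hy
    obtain ⟨hs_lb, ht_lb⟩ := lb2 m hm k hk y hy
    have h2 := hpT.2 ⟨k, hk⟩ (le_refl k)
    show Ts p ⟨k, hk⟩ + Tt p ⟨k, hk⟩ ≤ Ts y ⟨k, hk⟩ + Tt y ⟨k, hk⟩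
    rw [h2.1, h2.2, add_zero]
    linarith

lemma fold_eq (m : ℕ) (hm : 2 ≤ m) :
    (List.finRange m).reverse.foldl
      (fun S i => argminOn (fun p => Ts p i + Tt p i) S) (Flex m (1/6)) = TT m 0 := by
  rw [List.foldl_reverse]
  suffices H : ∀ j, j ≤ m →
      ((List.finRange m).drop (m - j)).foldr
        (fun i S => argminOn (fun p => Ts p i + Tt p i) S) (Flex m (1/6)) = TT m (m - j) by
    have := H m (le_refl m)
    simpa using this
  intro j
  induction j with
  | zero =>
      intro _
      rw [Nat.sub_zero, List.drop_eq_nil_of_le (by simp)]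
      simp only [List.foldr_nil]
      ext p
      constructor
      · intro hp
        exact ⟨hp, fun i hi => absurd i.isLt (by omega)⟩
      · intro hp
        exact hp.1
  | succ j ih =>
      intro hj
      have hj' : j ≤ m := Nat.le_of_succ_le hj
      have hlt : m - (j+1) < (List.finRange m).length := by simp; omega
      have hidx : (List.finRange m)[m - (j+1)] =
          (⟨m - (j+1), by omega⟩ : Fin m) := by
        rw [List.getElem_finRange]
        apply Fin.ext
        simp
      have e : m - (j+1) + 1 = m - j := by omega
      have hstep := step m hm (m - (j+1)) (by omega)
      have ih' := ih hj'
      rw [← e] at ih'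
      rw [List.drop_eq_getElem_cons hlt, List.foldr_cons, hidx, ih']
      exact hstep

end Stmt7Aux

/-- for every integer `m ≥ 2`, every element `(z, f, s, t, u)` of
`Slex(m, 1/6)` satisfies `z_m = 0` and `z_i = 1/2` for every `i = 1, …, m−1`. -/
theorem stmt7 (m : ℕ) (hm : 2 ≤ m) :
    ∀ p ∈ Slex m (1 / 6), ∀ i : Fin m,
      (i.val = m - 1 → Tz p i = 0) ∧ (i.val < m - 1 → Tz p i = 1 / 2) := by
  intro p hp i
  rw [Slex, Stmt7Aux.fold_eq m hm] at hp
  obtain ⟨⟨hF, hE⟩, -⟩ := hp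
  have hz : Tz p i = 2 * (Ts p i - Tt p i) := (hF.2.1 i).2.2.1
  have hst := hE i (Nat.zero_le _)
  constructor
  · intro hi
    rw [hz, hst.1, hst.2]
    simp [Stmt7Aux.cc, hi]
  · intro hi
    rw [hz, hst.1, hst.2]
    have hne : ¬ (i.val = m - 1) := by omega
    simp [Stmt7Aux.cc, hne]
    norm_num
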